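/- For every dimension d ≥ 1, every c > 0 and every δ ∈ (0,1), one has T_{d,c}(α) ≥ β_c(α) and T_{d,c,δ}(α) ≥ β_{c,δ}(α) for every α ∈ [0,1]. -/

import Mathlib

open MeasureTheory ProbabilityTheory Real Filter Topology
open scoped NNReal ENNReal

noncomputable section

/-- The exponential distribution with rate 1 on `ℝ`. -/
def expOne : Measure ℝ :=
  (volume.restrict (Set.Ioi (0 : ℝ))).withDensity fun w => ENNReal.ofReal (Real.exp (-w))

/-- The centered Gaussian measure on `ℝ^d` with covariance matrix `σ2 • I_d`. -/
def gaussPi (d : ℕ) (σ2 : ℝ) : Measure (Fin d → ℝ) :=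
  Measure.pi fun _ => gaussianReal 0 σ2.toNNReal

/-- The symmetric multivariate Laplace distribution `SL_d(σ2 • I_d)`:
the law of `√W • X` with `W ~ Exp(1)` and `X ~ N(0, σ2 I_d)` independent. -/
def SLM (d : ℕ) (σ2 : ℝ) : Measure (Fin d → ℝ) :=
  Measure.map (fun p : ℝ × (Fin d → ℝ) => Real.sqrt p.1 • p.2) (expOne.prod (gaussPi d σ2))

/-- The zero-inflated symmetric multivariate Laplace distribution `ZIL(δ, σ2 • I_d)`:
the law of `1{ξ = 0} • S` with `ξ ~ Bernoulli(δ)` and `S ~ SL_d(σ2 I_d)` independent. -/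
def ZILM (d : ℕ) (δ : ℝ) (σ2 : ℝ) : Measure (Fin d → ℝ) :=
  ENNReal.ofReal δ • Measure.dirac (0 : Fin d → ℝ) + ENNReal.ofReal (1 - δ) • SLM d σ2

/-- The trade-off function `T(P, Q)` between two measures. -/
def tradeOff {Ω : Type*} [MeasurableSpace Ω] (P Q : Measure Ω) (α : ℝ) : ℝ :=
  sInf {b | ∃ φ : Ω → ℝ, Measurable φ ∧ (∀ ω, φ ω ∈ Set.Icc (0 : ℝ) 1) ∧
    (∫ ω, φ ω ∂P) ≤ α ∧ b = 1 - ∫ ω, φ ω ∂Q}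

/-- `T_{d,c}`: the trade-off function between `SL_d(I_d)` and `(c, 0, …, 0)ᵀ + SL_d(I_d)`. -/
def Tdc (d : ℕ) (c : ℝ) (α : ℝ) : ℝ :=
  tradeOff (SLM d 1)
    (Measure.map (fun x => (fun j : Fin d => if (j : ℕ) = 0 then c else 0) + x) (SLM d 1)) α

/-- `T_{d,c,δ}`. -/
def Tdcd (d : ℕ) (c δ : ℝ) (α : ℝ) : ℝ :=
  if α ≤ 1 - δ then (1 - δ) * Tdc d c (α / (1 - δ)) else 0

/-- The law `P` of `(√W · X₁, W)`. -/
def pairP : Measure (ℝ × ℝ) :=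
  Measure.map (fun p : ℝ × ℝ => (Real.sqrt p.1 * p.2, p.1)) (expOne.prod (gaussianReal 0 1))

/-- The law `Q` of `(c + √W · X₁, W)`. -/
def pairQ (c : ℝ) : Measure (ℝ × ℝ) :=
  Measure.map (fun p : ℝ × ℝ => (c + Real.sqrt p.1 * p.2, p.1)) (expOne.prod (gaussianReal 0 1))

/-- `β_c`: the trade-off function between the laws of `(√W·X₁, W)` and `(c + √W·X₁, W)`. -/
def betaC (c : ℝ) (α : ℝ) : ℝ := tradeOff pairP (pairQ c) α

/-- `β_{c,δ}`. -/
def betaCD (c δ : ℝ) (α : ℝ) : ℝ :=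
  if α ≤ 1 - δ then (1 - δ) * betaC c (α / (1 - δ)) else 0

/-- The standard normal cumulative distribution function `Φ`. -/
def stdNormCDF (x : ℝ) : ℝ := ((gaussianReal 0 1) (Set.Iic x)).toReal

/-- `F_c(x) = ∫₀^∞ Φ(√w·x/c + c/(2√w)) e^{−w} dw`. -/
def Fc (c x : ℝ) : ℝ :=
  ∫ w in Set.Ioi (0 : ℝ),
    stdNormCDF (Real.sqrt w * x / c + c / (2 * Real.sqrt w)) * Real.exp (-w)

/-- The quantile function of `F_c`. -/
def FcInv (c p : ℝ) : ℝ := sInf {x : ℝ | p ≤ Fc c x}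

end

/-! Add the missing coordinates by a Markov kernel: given `(y, w)`, output `(y, √w • X')` with an
independent `X' ~ N(0, I_{d-1})`. It carries the law of `(c + √W X₁, W)` to `ν_c` (and, for
`c = 0`, that of `(√W X₁, W)` to `SL_d(I_d)`), because `(X₁, X')` is again standard Gaussian.
Post-processing with independent noise `Z` only makes testing harder (a test `φ` of the processed
laws is simulated by the test `x ↦ E φ(F(x, Z))` of the original ones), so `T_{d,c} ≥ β_c`; the
`δ`-versions are the same inequality rescaled by `1 - δ ≥ 0`. -/

section TradeOff

variable {Ω Ω' Λ : Type*} [MeasurableSpace Ω] [MeasurableSpace Ω'] [MeasurableSpace Λ]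

lemma integral_le_one_of_mem_Icc {μ : Measure Ω} [IsProbabilityMeasure μ] {f : Ω → ℝ}
    (hf : ∀ ω, f ω ∈ Set.Icc (0 : ℝ) 1) : ∫ ω, f ω ∂μ ≤ 1 := by
  calc ∫ ω, f ω ∂μ ≤ ∫ _, (1 : ℝ) ∂μ :=
        integral_mono_of_nonneg (.of_forall fun ω => (hf ω).1) (integrable_const 1)
          (.of_forall fun ω => (hf ω).2)
    _ = 1 := by simp

lemma tradeOff_le {P Q : Measure Ω} [IsProbabilityMeasure Q] {α : ℝ} {φ : Ω → ℝ}
    (hφ : Measurable φ) (hφ01 : ∀ ω, φ ω ∈ Set.Icc (0 : ℝ) 1) (hα : ∫ ω, φ ω ∂P ≤ α) :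
    tradeOff P Q α ≤ 1 - ∫ ω, φ ω ∂Q := by
  refine csInf_le ⟨0, ?_⟩ ⟨φ, hφ, hφ01, hα, rfl⟩
  rintro _ ⟨ψ, -, hψ01, -, rfl⟩
  linarith [integral_le_one_of_mem_Icc (μ := Q) hψ01]

lemma le_tradeOff {P Q : Measure Ω} {α b : ℝ} (hα : 0 ≤ α)
    (h : ∀ φ : Ω → ℝ, Measurable φ → (∀ ω, φ ω ∈ Set.Icc (0 : ℝ) 1) →
      ∫ ω, φ ω ∂P ≤ α → b ≤ 1 - ∫ ω, φ ω ∂Q) :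
    b ≤ tradeOff P Q α := by
  refine le_csInf ⟨_, fun _ => 0, measurable_const, fun _ => ⟨le_rfl, zero_le_one⟩,
    by simpa using hα, rfl⟩ ?_
  rintro _ ⟨φ, hφ, hφ01, hφα, rfl⟩
  exact h φ hφ hφ01 hφα

lemma integral_map_prod_of_mem_Icc {μ : Measure Ω} {ν : Measure Λ} [IsFiniteMeasure μ]
    [IsFiniteMeasure ν] {F : Ω × Λ → Ω'} (hF : Measurable F) {φ : Ω' → ℝ} (hφ : Measurable φ)
    (hφ01 : ∀ y, φ y ∈ Set.Icc (0 : ℝ) 1) :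
    ∫ y, φ y ∂(μ.prod ν).map F = ∫ x, ∫ z, φ (F (x, z)) ∂ν ∂μ := by
  rw [integral_map hF.aemeasurable hφ.aestronglyMeasurable]
  refine integral_prod _ (Integrable.of_bound (hφ.comp hF).aestronglyMeasurable 1
    (.of_forall fun p => ?_))
  rw [Real.norm_of_nonneg (hφ01 _).1]
  exact (hφ01 _).2

theorem tradeOff_le_tradeOff_map_prod {P Q : Measure Ω} [IsFiniteMeasure P]
    [IsProbabilityMeasure Q] (ν : Measure Λ) [IsProbabilityMeasure ν] {F : Ω × Λ → Ω'}
    (hF : Measurable F) {α : ℝ} (hα : 0 ≤ α) :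
    tradeOff P Q α ≤ tradeOff ((P.prod ν).map F) ((Q.prod ν).map F) α := by
  refine le_tradeOff hα fun φ hφ hφ01 hφα => ?_
  rw [integral_map_prod_of_mem_Icc hF hφ hφ01] at hφα ⊢
  refine tradeOff_le ?_ (fun x => ⟨integral_nonneg fun z => (hφ01 _).1,
    integral_le_one_of_mem_Icc fun z => hφ01 _⟩) hφα
  exact ((hφ.comp hF).stronglyMeasurable.integral_prod_right' (ν := ν)).measurable

end TradeOff

instance : IsProbabilityMeasure expOne := by
  constructor
  rw [expOne, withDensity_apply _ MeasurableSet.univ, Measure.restrict_univ,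
    ← ofReal_integral_eq_lintegral_ofReal]
  · rw [integral_exp_neg_Ioi_zero, ENNReal.ofReal_one]
  · simpa [IntegrableOn] using exp_neg_integrableOn_Ioi 0 one_pos
  · exact .of_forall fun x => (Real.exp_pos _).le

instance (d : ℕ) (σ2 : ℝ) : IsProbabilityMeasure (gaussPi d σ2) := by
  rw [gaussPi]; infer_instance

lemma gaussPi_succ (n : ℕ) (σ2 : ℝ) :
    gaussPi (n + 1) σ2 =
      ((gaussianReal 0 σ2.toNNReal).prod (gaussPi n σ2)).map fun p => Fin.cons p.1 p.2 := by
  have h := (measurePreserving_piFinSuccAbove (fun _ : Fin (n + 1) =>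
    gaussianReal 0 σ2.toNNReal) 0).symm
  rw [gaussPi, gaussPi, ← h.map_eq]
  congr 1
  ext p : 1
  exact Fin.insertNth_zero' _ _

instance (c : ℝ) : IsProbabilityMeasure (pairQ c) := by
  rw [pairQ]
  exact Measure.isProbabilityMeasure_map (by fun_prop)

lemma pairQ_zero : pairQ 0 = pairP := by
  simp [pairQ, pairP]

lemma map_prod_pairQ (n : ℕ) (c : ℝ) :
    ((pairQ c).prod (gaussPi n 1)).map (fun q : (ℝ × ℝ) × (Fin n → ℝ) =>
        (Fin.cons q.1.1 (√q.1.2 • q.2) : Fin (n + 1) → ℝ)) =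
      (SLM (n + 1) 1).map fun x => (fun j : Fin (n + 1) => if (j : ℕ) = 0 then c else 0) + x := by
  set γ := gaussianReal 0 1
  set ν := gaussPi n 1
  have hγ : gaussianReal 0 (1 : ℝ).toNNReal = γ := by simp [γ]
  have hLHS : (pairQ c).prod ν = ((expOne.prod γ).prod ν).map
      (Prod.map (fun p : ℝ × ℝ => (c + √p.1 * p.2, p.1)) id) := by
    rw [pairQ, ← Measure.map_prod_map _ _ (by fun_prop) measurable_id, Measure.map_id]
  have hRHS : expOne.prod (gaussPi (n + 1) 1) = ((expOne.prod γ).prod ν).map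
      (Prod.map id (fun p : ℝ × (Fin n → ℝ) => (Fin.cons p.1 p.2 : Fin (n + 1) → ℝ)) ∘
        MeasurableEquiv.prodAssoc) := by
    rw [← Measure.map_map (by fun_prop) MeasurableEquiv.prodAssoc.measurable,
      Measure.prodAssoc_prod, ← Measure.map_prod_map _ _ measurable_id (by fun_prop),
      Measure.map_id, gaussPi_succ, hγ]
  rw [hLHS, SLM, hRHS, Measure.map_map (by fun_prop) (by fun_prop),
    Measure.map_map (by fun_prop) (by fun_prop), Measure.map_map (by fun_prop) (by fun_prop)]
  congr 1
  ext ⟨⟨w, z⟩, x⟩ j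
  refine Fin.cases ?_ (fun i => ?_) j <;> simp [MeasurableEquiv.prodAssoc, mul_comm]

lemma betaC_le_Tdc (n : ℕ) (c : ℝ) {α : ℝ} (hα : 0 ≤ α) : betaC c α ≤ Tdc (n + 1) c α := by
  have h := tradeOff_le_tradeOff_map_prod (P := pairQ 0) (Q := pairQ c) (gaussPi n 1)
    (F := fun q : (ℝ × ℝ) × (Fin n → ℝ) => (Fin.cons q.1.1 (√q.1.2 • q.2) : Fin (n + 1) → ℝ))
    (by fun_prop) hα
  have hshift0 :
      (fun x => (fun j : Fin (n + 1) => if (j : ℕ) = 0 then (0 : ℝ) else 0) + x) = id := by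
    ext; simp
  rwa [map_prod_pairQ, map_prod_pairQ, pairQ_zero, hshift0, Measure.map_id] at h

theorem Tdc_ge_betaC_general (d : ℕ) (hd : 1 ≤ d) (c δ : ℝ) :
    ∀ α ∈ Set.Icc (0 : ℝ) 1, betaC c α ≤ Tdc d c α ∧ betaCD c δ α ≤ Tdcd d c δ α := by
  obtain ⟨n, rfl⟩ : ∃ n, d = n + 1 := ⟨d - 1, by omega⟩
  rintro α ⟨hα, -⟩
  refine ⟨betaC_le_Tdc n c hα, ?_⟩
  unfold betaCD Tdcd
  split_ifs with hαδ
  · have hδ : 0 ≤ 1 - δ := hα.trans hαδ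
    exact mul_le_mul_of_nonneg_left (betaC_le_Tdc n c (div_nonneg hα hδ)) hδ
  · rfl

/-- For every `d ≥ 1`, `c > 0` and `δ ∈ (0,1)`, `T_{d,c} ≥ β_c` and
`T_{d,c,δ} ≥ β_{c,δ}` on `[0,1]`. -/
theorem Tdc_ge_betaC (d : ℕ) (hd : 1 ≤ d) (c δ : ℝ) (hc : 0 < c)
    (hδ : δ ∈ Set.Ioo (0 : ℝ) 1) :
    ∀ α ∈ Set.Icc (0 : ℝ) 1, betaC c α ≤ Tdc d c α ∧ betaCD c δ α ≤ Tdcd d c δ α :=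
  Tdc_ge_betaC_general d hd c δ
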